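/- Let t ≥ 27, k ∈ {t-1,t}, and let s ≥ t+k+1 satisfy s ≡ t+k+1 (mod 2). Then 2c(s,t,k) ≥ s+4; moreover if s ≥ t+k+3 then 2c(s,t,k) ≥ s+6. -/

import Mathlib

/-!
Write `s = t + k + 1 + 2m`. Clearing the divisions by 2 and 6, six times the numerator of the floor
defining `c(s,t,k)` is an explicit cubic polynomial in `s, t, k, m`. For `k = t - 1` (so `s = 2t + 2m`)
and `k = t` (so `s = 2t + 1 + 2m`), subtracting `6 b (s - 1)` for the target bound `b` leaves a
polynomial in `t, m` that is visibly nonnegative once `t ≥ 1`, `m ≥ 0` (and `m ≥ 1` for the sharper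
bound), so the floor is at least `b`.
-/

def bin3 (n : ℤ) : ℤ := n*(n-1)*(n-2)/6
def dtk (t k : ℤ) : ℤ := t*(t+1)/2 + k*(k+1)/2
def gtk (t k : ℤ) : ℤ := 2 + t*(t+1)*(2*t-5)/6 + k*(k+1)*(2*k-5)/6
def cc (s t k : ℤ) : ℤ := Int.fdiv (bin3 (s+3) - s * dtk t k - 6 - 3*(s-t-k-1)/2 + gtk t k) (s-1)
def dd (s t k : ℤ) : ℤ := bin3 (s+3) - s * dtk t k - 6 - 3*(s-t-k-1)/2 + gtk t k - (s-1) * cc s t k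
def gg (s t k : ℤ) : ℤ := cc s t k - 3 - 3*(s-t-k-1)/2

theorem six_dvd_mul_sub_one_mul_sub_two (n : ℤ) : 6 ∣ n * (n - 1) * (n - 2) := by
  have key : ∀ a : ZMod 6, a * (a - 1) * (a - 2) = 0 := by decide
  exact (ZMod.intCast_zmod_eq_zero_iff_dvd _ 6).mp (by push_cast; exact key _)

theorem six_dvd_mul_add_one_mul_two_mul_sub_five (n : ℤ) : 6 ∣ n * (n + 1) * (2 * n - 5) := by
  have key : ∀ a : ZMod 6, a * (a + 1) * (2 * a - 5) = 0 := by decide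
  exact (ZMod.intCast_zmod_eq_zero_iff_dvd _ 6).mp (by push_cast; exact key _)

def ccNum (s t k : ℤ) : ℤ := bin3 (s+3) - s * dtk t k - 6 - 3*(s-t-k-1)/2 + gtk t k

theorem six_mul_ccNum {s t k m : ℤ} (h : s - t - k - 1 = 2 * m) :
    6 * ccNum s t k = (s + 1) * (s + 2) * (s + 3) - 3 * s * (t * (t + 1) + k * (k + 1))
      + t * (t + 1) * (2 * t - 5) + k * (k + 1) * (2 * k - 5) - 18 * m - 24 := by
  have hbin := Int.ediv_mul_cancel (six_dvd_mul_sub_one_mul_sub_two (s + 3))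
  have hdt := Int.ediv_mul_cancel (Int.even_mul_succ_self t).two_dvd
  have hdk := Int.ediv_mul_cancel (Int.even_mul_succ_self k).two_dvd
  have hgt := Int.ediv_mul_cancel (six_dvd_mul_add_one_mul_two_mul_sub_five t)
  have hgk := Int.ediv_mul_cancel (six_dvd_mul_add_one_mul_two_mul_sub_five k)
  have hm : 3 * (s - t - k - 1) / 2 = 3 * m := by omega
  simp only [ccNum, bin3, dtk, gtk, hm]
  linear_combination hbin - 3 * s * hdt - 3 * s * hdk + hgt + hgk

theorem le_cc_of_mul_le {s t k b : ℤ} (hs : 1 < s) (h : b * (s - 1) ≤ ccNum s t k) :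
    b ≤ cc s t k := by
  rw [cc, Int.fdiv_eq_ediv_of_nonneg _ (by omega : (0 : ℤ) ≤ s - 1)]
  exact (Int.le_ediv_iff_mul_le (by omega)).mpr h

section
variable {t m : ℤ}

theorem add_two_le_cc_even (ht : 1 ≤ t) (hm : 0 ≤ m) : t + m + 2 ≤ cc (2*t + 2*m) t (t - 1) := by
  refine le_cc_of_mul_le (by omega) ?_
  have hnum := six_mul_ccNum (s := 2*t + 2*m) (k := t - 1) (m := m) (by ring)
  have ht0 : 0 ≤ t := by omega
  nlinarith [mul_nonneg (mul_nonneg ht0 hm) hm, mul_nonneg (mul_nonneg hm hm) hm,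
    mul_nonneg (mul_nonneg ht0 ht0) hm]

theorem add_three_le_cc_even (ht : 1 ≤ t) (hm : 1 ≤ m) : t + m + 3 ≤ cc (2*t + 2*m) t (t - 1) := by
  refine le_cc_of_mul_le (by omega) ?_
  have hnum := six_mul_ccNum (s := 2*t + 2*m) (k := t - 1) (m := m) (by ring)
  have ht0 : 0 ≤ t := by omega
  have hm0 : 0 ≤ m := by omega
  nlinarith [mul_nonneg (mul_nonneg ht0 hm0) hm0, mul_nonneg (mul_nonneg hm0 hm0) hm0,
    mul_nonneg (mul_nonneg ht0 ht0) hm0, mul_le_mul_of_nonneg_left hm ht0]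

theorem add_three_le_cc_odd (ht : 1 ≤ t) (hm : 0 ≤ m) : t + m + 3 ≤ cc (2*t + 1 + 2*m) t t := by
  refine le_cc_of_mul_le (by omega) ?_
  have hnum := six_mul_ccNum (s := 2*t + 1 + 2*m) (k := t) (m := m) (by ring)
  have ht0 : 0 ≤ t := by omega
  nlinarith [mul_nonneg (mul_nonneg ht0 hm) hm, mul_nonneg (mul_nonneg hm hm) hm,
    mul_nonneg (mul_nonneg ht0 ht0) hm]

theorem add_four_le_cc_odd (ht : 1 ≤ t) (hm : 1 ≤ m) : t + m + 4 ≤ cc (2*t + 1 + 2*m) t t := by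
  refine le_cc_of_mul_le (by omega) ?_
  have hnum := six_mul_ccNum (s := 2*t + 1 + 2*m) (k := t) (m := m) (by ring)
  have ht0 : 0 ≤ t := by omega
  have hm0 : 0 ≤ m := by omega
  nlinarith [mul_nonneg (mul_nonneg ht0 hm0) hm0, mul_nonneg (mul_nonneg hm0 hm0) hm0,
    mul_nonneg (mul_nonneg ht0 ht0) hm0, mul_le_mul_of_nonneg_left hm ht0]

end

theorem stmt10 (t k s : ℤ) (ht : 27 ≤ t) (hk : k = t - 1 ∨ k = t)
    (hs : t + k + 1 ≤ s) (hpar : (2:ℤ) ∣ (s - (t+k+1))) :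
    s + 4 ≤ 2 * cc s t k ∧ (t + k + 3 ≤ s → s + 6 ≤ 2 * cc s t k) := by
  obtain ⟨m, hm⟩ := hpar
  rcases hk with hk | hk <;> subst k
  · obtain rfl : s = 2*t + 2*m := by omega
    have h₀ := add_two_le_cc_even (by omega : 1 ≤ t) (by omega : 0 ≤ m)
    refine ⟨by omega, fun hs₃ => ?_⟩
    have h₁ := add_three_le_cc_even (by omega : 1 ≤ t) (by omega : 1 ≤ m)
    omega
  · obtain rfl : s = 2*t + 1 + 2*m := by omega
    have h₀ := add_three_le_cc_odd (by omega : 1 ≤ t) (by omega : 0 ≤ m)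
    refine ⟨by omega, fun hs₃ => ?_⟩
    have h₁ := add_four_le_cc_odd (by omega : 1 ≤ t) (by omega : 1 ≤ m)
    omega
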